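/- For a finite digraph G = (V,E), all components of the interval decomposition are singletons (equivalently, |Inf{v}| = 1 for all v) if and only if for every vertex v, d⁻(v) = 1 implies that the unique arc entering v is the loop (v,v). -/
import Mathlib


/-- Inflation of a vertex set in a digraph with arc relation `E`. -/
def dInfl {V : Type*} (E : V → V → Prop) (U : Set V) : Set V :=
  U ∪ {v | (∃ u, E u v) ∧ ∀ u, E u v → u ∈ U}

/-- Hyperinflation: union of all iterates of the inflation. -/
def dInflStar {V : Type*} (E : V → V → Prop) (U : Set V) : Set V :=
  ⋃ n : ℕ, (dInfl E)^[n] U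

/-- An interval: a region (hyperinflation of a singleton) that is maximal among regions. -/
def IsInterval {V : Type*} (E : V → V → Prop) (A : Set V) : Prop :=
  (∃ x : V, A = dInflStar E {x}) ∧
    ∀ y : V, A ⊆ dInflStar E {y} → A = dInflStar E {y}

section Aux

variable {V : Type*} (E : V → V → Prop)

lemma subset_dInfl (U : Set V) : U ⊆ dInfl E U := Set.subset_union_left

lemma dInfl_mono {U W : Set V} (h : U ⊆ W) : dInfl E U ⊆ dInfl E W := by
  rintro v (hv | ⟨hex, hall⟩)
  · exact Or.inl (h hv)
  · exact Or.inr ⟨hex, fun u hu => h (hall u hu)⟩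

lemma dInfl_iter_mono (n : ℕ) {U W : Set V} (h : U ⊆ W) :
    (dInfl E)^[n] U ⊆ (dInfl E)^[n] W := by
  induction n generalizing U W with
  | zero => exact h
  | succ n ih =>
    rw [Function.iterate_succ_apply', Function.iterate_succ_apply']
    exact dInfl_mono E (ih h)

lemma subset_dInflStar (U : Set V) : U ⊆ dInflStar E U :=
  Set.subset_iUnion (fun n => (dInfl E)^[n] U) 0

lemma dInflStar_mono {U W : Set V} (h : U ⊆ W) : dInflStar E U ⊆ dInflStar E W :=
  Set.iUnion_mono fun n => dInfl_iter_mono E n h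

lemma dInflStar_eq_iter [Fintype V] (U : Set V) :
    ∃ n, dInflStar E U = (dInfl E)^[n] U ∧ dInfl E ((dInfl E)^[n] U) = (dInfl E)^[n] U := by
  have hstep : ∀ n, (dInfl E)^[n] U ⊆ (dInfl E)^[n + 1] U := by
    intro n
    rw [Function.iterate_succ_apply']
    exact subset_dInfl E _
  obtain ⟨n, hn⟩ : ∃ n, (dInfl E)^[n + 1] U = (dInfl E)^[n] U := by
    by_contra hc
    push_neg at hc
    have key : ∀ n, n ≤ ((dInfl E)^[n] U).ncard := by
      intro n
      induction n with
      | zero => exact Nat.zero_le _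
      | succ n ih =>
        have hss : (dInfl E)^[n] U ⊂ (dInfl E)^[n + 1] U :=
          lt_of_le_of_ne (hstep n) (fun heq => hc n heq.symm)
        have := Set.ncard_lt_ncard hss (Set.toFinite _)
        omega
    have h1 := key (Fintype.card V + 1)
    have h2 : ((dInfl E)^[Fintype.card V + 1] U).ncard ≤ Fintype.card V := by
      have := Set.ncard_le_ncard (Set.subset_univ ((dInfl E)^[Fintype.card V + 1] U))
        (Set.toFinite _)
      rwa [Set.ncard_univ, Nat.card_eq_fintype_card] at this
    omega
  have hmono : Monotone (fun n => (dInfl E)^[n] U) := monotone_nat_of_le_succ hstep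
  refine ⟨n, ?_, (Function.iterate_succ_apply' (dInfl E) n U).symm.trans hn⟩
  apply Set.Subset.antisymm _ (Set.subset_iUnion _ n)
  apply Set.iUnion_subset
  intro m
  rcases le_or_gt m n with hle | hlt
  · exact hmono hle
  · have : ∀ k, (dInfl E)^[n + k] U = (dInfl E)^[n] U := by
      intro k
      induction k with
      | zero => rfl
      | succ k ih =>
        rw [← Nat.add_assoc, Function.iterate_succ_apply', ih]
        exact (Function.iterate_succ_apply' (dInfl E) n U).symm.trans hn
    have hm : m = n + (m - n) := by omega
    rw [hm, this]

lemma dInflStar_idem [Fintype V] (U : Set V) :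
    dInflStar E (dInflStar E U) = dInflStar E U := by
  obtain ⟨n, h1, h2⟩ := dInflStar_eq_iter E U
  rw [h1]
  apply Set.Subset.antisymm _ (subset_dInflStar E _)
  apply Set.iUnion_subset
  intro m
  have : ∀ m, (dInfl E)^[m] ((dInfl E)^[n] U) = (dInfl E)^[n] U := by
    intro m
    induction m with
    | zero => rfl
    | succ m ih => rw [Function.iterate_succ_apply', ih, h2]
  rw [this]

lemma dInflStar_trans [Fintype V] {U W : Set V} (h : U ⊆ dInflStar E W) :
    dInflStar E U ⊆ dInflStar E W := by
  have := dInflStar_mono E h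
  rwa [dInflStar_idem] at this

end Aux

theorem stmt_12 {V : Type*} [Fintype V] (E : V → V → Prop) :
    (∀ A : Set V, IsInterval E A → ∃ v : V, A = {v}) ↔
      (∀ v : V, (∃! u : V, E u v) → {u | E u v} = {v}) := by
  classical
  constructor
  · intro hA v hv
    obtain ⟨u, hu, huniq⟩ := hv
    -- v is in the inflation of {u}
    have hvmem : v ∈ dInfl E {u} :=
      Or.inr ⟨⟨u, hu⟩, fun w hw => huniq w hw⟩
    have hvstar : v ∈ dInflStar E {u} :=
      Set.subset_iUnion (fun n => (dInfl E)^[n] ({u} : Set V)) 1 hvmem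
    -- pick a maximal region containing dInflStar {u}
    obtain ⟨y, hy, hmax⟩ := Finset.exists_max_image
      (Finset.univ.filter fun y => dInflStar E {u} ⊆ dInflStar E {y})
      (fun y => (dInflStar E {y}).ncard)
      ⟨u, by simp⟩
    have hysub : dInflStar E {u} ⊆ dInflStar E {y} := (Finset.mem_filter.mp hy).2
    have hIA : IsInterval E (dInflStar E {y}) := by
      refine ⟨⟨y, rfl⟩, fun z hz => ?_⟩
      have hzsub : dInflStar E {u} ⊆ dInflStar E {z} := hysub.trans hz
      have hzle : (dInflStar E {z}).ncard ≤ (dInflStar E {y}).ncard :=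
        hmax z (Finset.mem_filter.mpr ⟨Finset.mem_univ z, hzsub⟩)
      exact Set.eq_of_subset_of_ncard_le hz hzle (Set.toFinite _)
    obtain ⟨a, ha⟩ := hA _ hIA
    have humem : u ∈ dInflStar E {y} := hysub (subset_dInflStar E {u} rfl)
    have hvmem' : v ∈ dInflStar E {y} := hysub hvstar
    rw [ha] at humem hvmem'
    have huv : u = v := by
      rw [Set.mem_singleton_iff] at humem hvmem'
      rw [humem, hvmem']
    ext w
    simp only [Set.mem_setOf_eq, Set.mem_singleton_iff]
    constructor
    · intro hw
      rw [huniq w hw, huv]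
    · intro hw
      rw [hw]
      exact huv ▸ hu
  · intro h A hA
    obtain ⟨⟨x, rfl⟩, _⟩ := hA
    refine ⟨x, ?_⟩
    have hfix : dInfl E {x} = {x} := by
      apply Set.Subset.antisymm _ (subset_dInfl E _)
      rintro v (hv | ⟨⟨w, hw⟩, hall⟩)
      · exact hv
      · have hwx : w = x := hall w hw
        have hEx : E x v := hwx ▸ hw
        have huniq : ∃! u, E u v := ⟨x, hEx, fun z hz => hall z hz⟩
        have hset := h v huniq
        have hxv : x ∈ ({v} : Set V) := hset ▸ hEx
        rw [Set.mem_singleton_iff] at hxv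
        rw [← hxv]
        rfl
    have hiter : ∀ n, (dInfl E)^[n] ({x} : Set V) = {x} := by
      intro n
      induction n with
      | zero => rfl
      | succ n ih => rw [Function.iterate_succ_apply', ih, hfix]
    simp [dInflStar, hiter]
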